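/- Let α = (9−√5)/38 and μ* = 5√5 − 11. The 9×9 real symmetric matrix N(μ*) is positive semidefinite. In particular, the Hardy point l2(μ*) belongs to the Almost Quantum set. -/

import Mathlib

/-!
The leading 8×8 block of `N (5√5 - 11)` has rank 4 and an explicit `LDLᵀ` factorisation over
`ℚ(√5)`: `N = Lᵀ D L` with `L = hardyFactor` unit upper triangular on its first four columns and
`D = diag(1, 5√5 - 11, (3 - √5)/4, (13√5 - 29)/2)`. Since `29/13 < √5 < 3`, all pivots are
nonnegative, so `N` is a congruence transform of a nonnegative diagonal matrix.
-/

noncomputable def α : ℝ := (9 - Real.sqrt 5) / 38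

noncomputable def N (μ : ℝ) : Matrix (Fin 9) (Fin 9) ℝ :=
  !![1, μ/2+α*(1-μ), μ/2+2*α*(1-μ), μ/2+α*(1-μ), μ/2+2*α*(1-μ), μ/2, μ/2+α*(1-μ), μ/2+α*(1-μ), 0;
     μ/2+α*(1-μ), μ/2+α*(1-μ), 0, μ/2, μ/2+α*(1-μ), μ/2, μ/2+α*(1-μ), μ/2, 0;
     μ/2+2*α*(1-μ), 0, μ/2+2*α*(1-μ), μ/2+α*(1-μ), 0, μ/2, 0, μ/2+α*(1-μ), 0;
     μ/2+α*(1-μ), μ/2, μ/2+α*(1-μ), μ/2+α*(1-μ), 0, μ/2, μ/2, μ/2+α*(1-μ), 0;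
     μ/2+2*α*(1-μ), μ/2+α*(1-μ), 0, 0, μ/2+2*α*(1-μ), μ/2, μ/2+α*(1-μ), 0, 0;
     μ/2, μ/2, μ/2, μ/2, μ/2, μ/2, μ/2, μ/2, 0;
     μ/2+α*(1-μ), μ/2+α*(1-μ), 0, μ/2, μ/2+α*(1-μ), μ/2, μ/2+α*(1-μ), μ/2, 0;
     μ/2+α*(1-μ), μ/2, μ/2+α*(1-μ), μ/2+α*(1-μ), 0, μ/2, μ/2, μ/2+α*(1-μ), 0;
     0, 0, 0, 0, 0, 0, 0, 0, 0]

open Matrix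

noncomputable def hardyFactor : Matrix (Fin 4) (Fin 9) ℝ :=
  !![1, √5-2, (3-√5)/2, √5-2, (3-√5)/2, (5*√5-11)/2, √5-2, √5-2, 0;
     0, 1, -1/2, (3-√5)/4, (1+√5)/4, (3-√5)/2, 1, (3-√5)/4, 0;
     0, 0, 1, (3*√5-5)/2, (√5-3)/2, 2*√5-4, 0, (3*√5-5)/2, 0;
     0, 0, 0, 1, -(1+√5)/2, (1-√5)/2, 0, 1, 0]

noncomputable def hardyPivots : Fin 4 → ℝ := ![1, 5*√5-11, (3-√5)/4, (13*√5-29)/2]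

lemma hardyPivots_nonneg : 0 ≤ hardyPivots := by
  have h5 : √5 ^ 2 = 5 := Real.sq_sqrt (by norm_num)
  have h0 : 0 ≤ √5 := Real.sqrt_nonneg 5
  intro k
  fin_cases k <;> simp [hardyPivots] <;> nlinarith

lemma N_eq_conjTranspose_mul_diagonal_mul :
    N (5*√5-11) = hardyFactorᴴ * diagonal hardyPivots * hardyFactor := by
  have h5 : √5 ^ 2 = 5 := Real.sq_sqrt (by norm_num)
  have h3 : √5 ^ 3 = 5 * √5 := by rw [pow_succ, h5]
  ext i j
  fin_cases i <;> fin_cases j <;>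
    simp only [N, α, hardyFactor, hardyPivots, conjTranspose_eq_transpose_of_trivial, mul_apply,
      transpose_apply, diagonal_apply, Fin.sum_univ_four, of_apply, cons_val, Fin.isValue,
      Fin.reduceFinMk, Fin.reduceEq, if_true, if_false] <;>
    ring_nf <;> simp only [h5, h3] <;> ring_nf

theorem stmt7 : (N (5 * Real.sqrt 5 - 11)).PosSemidef := by
  rw [N_eq_conjTranspose_mul_diagonal_mul]
  exact (PosSemidef.diagonal hardyPivots_nonneg).conjTranspose_mul_mul_same hardyFactor
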